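/- Let n be odd, and let a, b, c, with 3 ≤ a ≤ b < c < n/2 and c = a + b − 2. Then the 5-tuple (1, 1, c, n−b, n−a) is a zero-sum sequence over Z/n (its entries sum to 2n), and every minimal zero-sum sequence of the form (1, 1, x3, x4, x5) over Z/n with 1 + 1 + x3 + x4 + x5 = 2n and x3, x4, x5 ∈ [2, n−1] can, after reordering, be written in this form with suitable a, b, c satisfying 3 ≤ a ≤ b, c = a + b − 2 — unless it already has index 1. -/

import Mathlib

/-- `lpr n x` is the least positive residue of `x` modulo `n` (in `[1, n]`). -/
def lpr (n x : ℕ) : ℕ := if x % n = 0 then n else x % n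

/-!
Minimality rules out the sub-sums `1 + x` and `1 + 1 + x`, so every `xᵢ ≤ n - 3`. As
`x₃ + x₄ + x₅ = 2n - 2`, at most one `xᵢ` lies below `n/2`. If exactly one does, it is `c`
and the other two are `n - b`, `n - a`; the sum condition is then `c = a + b - 2`. If none
does, multiplying by the unit `2` sends `(1, 1, x₃, x₄, x₅)` to
`(2, 2, 2x₃ - n, 2x₄ - n, 2x₅ - n)`, whose sum is `n`, so the index is `1`.
-/

lemma lpr_of_pos_of_lt {n x : ℕ} (hx : 0 < x) (hxn : x < n) : lpr n x = x := by
  rw [lpr, Nat.mod_eq_of_lt hxn, if_neg hx.ne']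

lemma lpr_two_mul_of_lt {n x : ℕ} (hx : n < 2 * x) (hxn : x < n) :
    lpr n (2 * x) = 2 * x - n := by
  have hmod : 2 * x % n = 2 * x - n := by
    rw [Nat.mod_eq_sub_mod hx.le, Nat.mod_eq_of_lt (by omega)]
  rw [lpr, hmod, if_neg (by omega)]

lemma add_three_le_of_minimal {n : ℕ} {x : Fin 5 → ℕ}
    (hmin : ∀ s : Finset (Fin 5), s.Nonempty → s ≠ Finset.univ → ¬ n ∣ ∑ i ∈ s, x i)
    (h0 : x 0 = 1) (h1 : x 1 = 1) {i : Fin 5} (hi : 2 ≤ i) (hlt : x i < n) :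
    x i + 3 ≤ n := by
  have hi0 : (0 : Fin 5) ∉ ({i} : Finset (Fin 5)) := by
    rw [Finset.notMem_singleton]; omega
  have hi1 : (1 : Fin 5) ∉ ({0, i} : Finset (Fin 5)) := by
    rw [Finset.mem_insert, Finset.mem_singleton]; omega
  have hne {s : Finset (Fin 5)} (hs : s.card < 5) : s ≠ Finset.univ := by
    rintro rfl; simp at hs
  have hpair : ¬ n ∣ 1 + x i := by
    have := hmin {0, i} (by simp) (hne (Finset.card_le_two.trans_lt (by decide)))
    rwa [Finset.sum_insert hi0, Finset.sum_singleton, h0] at this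
  have htriple : ¬ n ∣ 1 + 1 + x i := by
    have := hmin {1, 0, i} (by simp) (hne (Finset.card_le_three.trans_lt (by decide)))
    rwa [Finset.sum_insert hi1, Finset.sum_insert hi0, Finset.sum_singleton, h0, h1,
      ← add_assoc] at this
  by_contra! h
  obtain h | h : x i + 1 = n ∨ x i + 2 = n := by omega
  · exact hpair ⟨1, by omega⟩
  · exact htriple ⟨1, by omega⟩

lemma exists_standard_form {n c p q : ℕ} {M : Multiset ℕ} (hM : M = {c, p, q})
    (hc : 2 * c < n) (hp : p + 3 ≤ n) (hq : q + 3 ≤ n) (hsum : c + p + q = 2 * n - 2) :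
    ∃ a b c : ℕ, 3 ≤ a ∧ a ≤ b ∧ b < c ∧ 2 * c < n ∧ c = a + b - 2 ∧
      M = {c, n - b, n - a} := by
  rcases le_total p q with h | h
  · refine ⟨n - q, n - p, c, by omega, by omega, by omega, hc, by omega, ?_⟩
    rw [hM, Nat.sub_sub_self (by omega), Nat.sub_sub_self (by omega)]
  · refine ⟨n - p, n - q, c, by omega, by omega, by omega, hc, by omega, ?_⟩
    rw [hM, Nat.sub_sub_self (by omega), Nat.sub_sub_self (by omega)]
    exact congrArg (c ::ₘ ·) (Multiset.cons_swap p q 0)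

lemma lpr_two_mul_sum_eq {n x y z : ℕ} (hn : 2 < n)
    (hx : n < 2 * x) (hxn : x < n) (hy : n < 2 * y) (hyn : y < n) (hz : n < 2 * z) (hzn : z < n)
    (hsum : 1 + 1 + x + y + z = 2 * n) :
    lpr n 2 + lpr n 2 + lpr n (2 * x) + lpr n (2 * y) + lpr n (2 * z) = n := by
  rw [lpr_of_pos_of_lt two_pos hn, lpr_two_mul_of_lt hx hxn, lpr_two_mul_of_lt hy hyn,
    lpr_two_mul_of_lt hz hzn]
  omega

theorem stmt_18 (n : ℕ) (hodd : Odd n) :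
    (∀ a b c : ℕ, 3 ≤ a → a ≤ b → b < c → 2 * c < n → c = a + b - 2 →
      1 + 1 + c + (n - b) + (n - a) = 2 * n) ∧
    (∀ x3 x4 x5 : ℕ,
      2 ≤ x3 → x3 ≤ n - 1 → 2 ≤ x4 → x4 ≤ n - 1 → 2 ≤ x5 → x5 ≤ n - 1 →
      1 + 1 + x3 + x4 + x5 = 2 * n →
      (∀ s : Finset (Fin 5), s.Nonempty → s ≠ Finset.univ →
        ¬ n ∣ ∑ i ∈ s, (![1, 1, x3, x4, x5] : Fin 5 → ℕ) i) →
      (∃ m : ℕ, Nat.gcd m n = 1 ∧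
          lpr n m + lpr n m + lpr n (m * x3) + lpr n (m * x4) +
            lpr n (m * x5) = n) ∨
      ∃ a b c : ℕ, 3 ≤ a ∧ a ≤ b ∧ b < c ∧ 2 * c < n ∧ c = a + b - 2 ∧
        ({x3, x4, x5} : Multiset ℕ) = {c, n - b, n - a}) := by
  refine ⟨fun a b c _ _ _ _ _ ↦ by omega, ?_⟩
  intro x3 x4 x5 h3 h3n h4 h4n h5 h5n hsum hmin
  have hn : n % 2 = 1 := Nat.odd_iff.mp hodd
  have h3t : x3 + 3 ≤ n :=
    add_three_le_of_minimal hmin rfl rfl (i := 2) (by decide) (show x3 < n by omega)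
  have h4t : x4 + 3 ≤ n :=
    add_three_le_of_minimal hmin rfl rfl (i := 3) (by decide) (show x4 < n by omega)
  have h5t : x5 + 3 ≤ n :=
    add_three_le_of_minimal hmin rfl rfl (i := 4) (by decide) (show x5 < n by omega)
  by_cases c3 : 2 * x3 < n
  · exact Or.inr (exists_standard_form rfl c3 h4t h5t (by omega))
  by_cases c4 : 2 * x4 < n
  · exact Or.inr (exists_standard_form (Multiset.cons_swap _ _ _) c4 h3t h5t (by omega))
  by_cases c5 : 2 * x5 < n
  · have hM : ({x3, x4, x5} : Multiset ℕ) = {x5, x3, x4} := by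
      rw [Multiset.insert_eq_cons, Multiset.pair_comm]
      exact Multiset.cons_swap _ _ _
    exact Or.inr (exists_standard_form hM c5 h3t h4t (by omega))
  exact Or.inl ⟨2, Nat.coprime_two_left.mpr hodd,
    lpr_two_mul_sum_eq (by omega) (by omega) (by omega) (by omega) (by omega) (by omega)
      (by omega) hsum⟩
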